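/- arXiv:1704.03127 — 6 statements merged into one kernel-verified Lean document; each statement's English description precedes it below -/
import Mathlib

section
/- Let f₁ and f₂ be probability density functions on ℝ that are continuous, bounded, symmetric about zero, and strictly unimodal at zero (i.e., strictly increasing on (-∞,0] and strictly decreasing on [0,∞)). Then their convolution f(u) = ∫ f₁(v) f₂(u - v) dv is strictly unimodal at zero: for any 0 < u₁ < u₂, f(u₂) < f(u₁), and for any u₂ < u₁ < 0, f(u₂) < f(u₁). -/
/-!
Write `u₁ = a - b`, `u₂ = a + b` with `a, b > 0`. The difference `(f₁ ⋆ f₂)(u₁) - (f₁ ⋆ f₂)(u₂)`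
is the integral of `F v = f₁ v * (f₂ (u₁ - v) - f₂ (u₂ - v))`; averaging `F` over the reflection
`v ↦ 2a - v` turns the integrand into `(f₁ (a + w) - f₁ (a - w)) * (f₂ (b + w) - f₂ (b - w))`.
Since `|a - w| < |a + w|` and `|b - w| < |b + w|` for `w > 0` (and the reverse for `w < 0`),
both factors have the same sign, so the integrand is positive off `w = 0`.
-/

open MeasureTheory Set
open scoped Convolution

theorem Function.Even.apply_abs {α β : Type*} [AddGroup α] [LinearOrder α] {f : α → β}
    (hf : f.Even) (a : α) : f |a| = f a := by
  rcases abs_choice a with h | h <;> simp only [h, hf.eq]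

theorem Function.Even.lt_of_abs_lt {α β : Type*} [AddCommGroup α] [LinearOrder α]
    [IsOrderedAddMonoid α] [Preorder β] {f : α → β} (hf : f.Even) (hanti : StrictAntiOn f (Ici 0))
    {a b : α} (h : |a| < |b|) : f b < f a := by
  rw [← hf.apply_abs a, ← hf.apply_abs b]
  exact hanti (abs_nonneg a) (abs_nonneg b) h

section OrderedRing

variable {R S : Type*} [CommRing R] [LinearOrder R] [IsStrictOrderedRing R]

theorem abs_sub_lt_abs_add_of_mul_pos {a b : R} (h : 0 < a * b) : |a - b| < |a + b| := by
  rw [← sq_lt_sq]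
  nlinarith

theorem Function.Even.add_lt_sub_of_mul_pos [Preorder S] {f : R → S} (hf : f.Even)
    (hanti : StrictAntiOn f (Ici 0)) {a w : R} (h : 0 < a * w) : f (a + w) < f (a - w) :=
  hf.lt_of_abs_lt hanti (abs_sub_lt_abs_add_of_mul_pos h)

theorem Function.Even.mul_sub_pos [Ring S] [LinearOrder S] [IsStrictOrderedRing S]
    {f g : R → S} (hf : f.Even) (hg : g.Even)
    (hf_anti : StrictAntiOn f (Ici 0)) (hg_anti : StrictAntiOn g (Ici 0))
    {a b w : R} (ha : 0 < a) (hb : 0 < b) (hw : w ≠ 0) :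
    0 < (f (a + w) - f (a - w)) * (g (b + w) - g (b - w)) := by
  rcases hw.lt_or_gt with hw | hw
  · have hf_lt := hf.add_lt_sub_of_mul_pos hf_anti (mul_pos ha (neg_pos.2 hw))
    have hg_lt := hg.add_lt_sub_of_mul_pos hg_anti (mul_pos hb (neg_pos.2 hw))
    rw [← sub_eq_add_neg, sub_neg_eq_add] at hf_lt hg_lt
    exact mul_pos (sub_pos.2 hf_lt) (sub_pos.2 hg_lt)
  · have hf_lt := hf.add_lt_sub_of_mul_pos hf_anti (mul_pos ha hw)
    have hg_lt := hg.add_lt_sub_of_mul_pos hg_anti (mul_pos hb hw)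
    exact mul_pos_of_neg_of_neg (sub_neg.2 hf_lt) (sub_neg.2 hg_lt)

end OrderedRing

theorem MeasureTheory.integral_pos_of_ae_pos {α : Type*} [MeasurableSpace α] {μ : Measure α}
    [NeZero μ] {F : α → ℝ} (hF : Integrable F μ) (h : ∀ᵐ x ∂μ, 0 < F x) : 0 < ∫ x, F x ∂μ := by
  rw [integral_pos_iff_support_of_nonneg_ae (h.mono fun _ hx => hx.le) hF, pos_iff_ne_zero]
  intro h_null
  have : ∀ᵐ x ∂μ, False := by
    filter_upwards [h, measure_eq_zero_iff_ae_notMem.1 h_null] with x hx hx'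
    exact hx' hx.ne'
  exact NeZero.ne μ (ae_eq_bot.1 (Filter.eventually_false_iff_eq_bot.1 this))

theorem MeasureTheory.integral_pos_of_add_reflect_pos {F : ℝ → ℝ} (hF : Integrable F) (c : ℝ)
    (h : ∀ w ≠ 0, 0 < F (c + w) + F (c - w)) : 0 < ∫ v, F v := by
  have h_ae : ∀ᵐ w, 0 < F (c + w) + F (c - w) := by
    filter_upwards [Measure.ae_ne volume 0] with w hw using h w hw
  have h_sum : ∫ w, (F (c + w) + F (c - w)) = 2 * ∫ v, F v := by
    rw [integral_add (hF.comp_add_left c) (hF.comp_sub_left c), integral_add_left_eq_self,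
      integral_sub_left_eq_self, two_mul]
  have h_pos : 0 < ∫ w, (F (c + w) + F (c - w)) :=
    integral_pos_of_ae_pos ((hF.comp_add_left c).add (hF.comp_sub_left c)) h_ae
  linarith

section Convolution

open ContinuousLinearMap

variable {f g : ℝ → ℝ}

theorem convolutionExists_of_bddAbove_norm (hf : Integrable f) (hg : AEStronglyMeasurable g)
    (hg_bdd : BddAbove (range fun x => ‖g x‖)) : ConvolutionExists f g (lsmul ℝ ℝ) := fun x =>
  BddAbove.convolutionExistsAt (lsmul ℝ ℝ) (s := univ) (by simpa [image_univ] using hg_bdd)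
    MeasurableSet.univ (subset_univ _) hf.integrableOn hg

theorem Function.Even.convolution (hf : f.Even) (hg : g.Even) : (f ⋆ g).Even := fun _ =>
  convolution_neg_of_neg_eq _ (ae_of_all _ hf) (ae_of_all _ hg)

theorem convolution_add_lt_convolution_sub (hfg : ConvolutionExists f g (lsmul ℝ ℝ))
    (hf : f.Even) (hg : g.Even) (hf_anti : StrictAntiOn f (Ici 0))
    (hg_anti : StrictAntiOn g (Ici 0)) {a b : ℝ} (ha : 0 < a) (hb : 0 < b) :
    (f ⋆ g) (a + b) < (f ⋆ g) (a - b) := by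
  set F : ℝ → ℝ := fun v => f v * (g (a - b - v) - g (a + b - v))
  have hF_int : Integrable F := by
    simp only [F, mul_sub]
    exact (hfg (a - b)).integrable.sub (hfg (a + b)).integrable
  have h_diff : (f ⋆ g) (a - b) - (f ⋆ g) (a + b) = ∫ v, F v := by
    simp only [convolution_lsmul, smul_eq_mul, F, mul_sub]
    exact (integral_sub (hfg (a - b)).integrable (hfg (a + b)).integrable).symm
  have h_pair : ∀ w ≠ 0, 0 < F (a + w) + F (a - w) := fun w hw => by
    have h_eq : F (a + w) + F (a - w) = (f (a + w) - f (a - w)) * (g (b + w) - g (b - w)) := by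
      simp only [F, show a - b - (a + w) = -(b + w) by ring, show a + b - (a + w) = b - w by ring,
        show a - b - (a - w) = -(b - w) by ring, show a + b - (a - w) = b + w by ring, hg.eq]
      ring
    rw [h_eq]
    exact hf.mul_sub_pos hg hf_anti hg_anti ha hb hw
  linarith [integral_pos_of_add_reflect_pos hF_int a h_pair]

theorem strictAntiOn_convolution (hfg : ConvolutionExists f g (lsmul ℝ ℝ)) (hf : f.Even)
    (hg : g.Even) (hf_anti : StrictAntiOn f (Ici 0)) (hg_anti : StrictAntiOn g (Ici 0)) :
    StrictAntiOn (f ⋆ g) (Ici 0) := fun x hx y _ hxy => by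
  have h := convolution_add_lt_convolution_sub hfg hf hg hf_anti hg_anti
    (a := (x + y) / 2) (b := (y - x) / 2) (by linarith [mem_Ici.1 hx]) (by linarith)
  rwa [show (x + y) / 2 + (y - x) / 2 = y by ring, show (x + y) / 2 - (y - x) / 2 = x by ring] at h

end Convolution

theorem convolution_strictly_unimodal_general
    (f₁ f₂ : ℝ → ℝ)
    (hc₂ : Continuous f₂)
    (hb₂ : ∃ M, ∀ x, f₂ x ≤ M)
    (hnn₂ : ∀ x, 0 ≤ f₂ x)
    (hint₁ : ∫ x, f₁ x = 1)
    (hsym₁ : ∀ x, f₁ (-x) = f₁ x) (hsym₂ : ∀ x, f₂ (-x) = f₂ x)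
    (hanti₁ : StrictAntiOn f₁ (Ici 0))
    (hanti₂ : StrictAntiOn f₂ (Ici 0)) :
    (∀ u₁ u₂ : ℝ, 0 < u₁ → u₁ < u₂ →
      (∫ v, f₁ v * f₂ (u₂ - v)) < ∫ v, f₁ v * f₂ (u₁ - v)) ∧
    (∀ u₁ u₂ : ℝ, u₂ < u₁ → u₁ < 0 →
      (∫ v, f₁ v * f₂ (u₂ - v)) < ∫ v, f₁ v * f₂ (u₁ - v)) := by
  obtain ⟨M, hM⟩ := hb₂
  have h_bdd : BddAbove (range fun x => ‖f₂ x‖) :=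
    ⟨M, forall_mem_range.2 fun x => by simpa [abs_of_nonneg (hnn₂ x)] using hM x⟩
  have h_exists := convolutionExists_of_bddAbove_norm (integrable_of_integral_eq_one hint₁)
    hc₂.aestronglyMeasurable h_bdd
  have h_lt : ∀ u₁ u₂ : ℝ, |u₁| < |u₂| → (f₁ ⋆ f₂) u₂ < (f₁ ⋆ f₂) u₁ := fun _ _ =>
    (Function.Even.convolution hsym₁ hsym₂).lt_of_abs_lt
      (strictAntiOn_convolution h_exists hsym₁ hsym₂ hanti₁ hanti₂)
  refine ⟨fun u₁ u₂ h₁ h₁₂ => h_lt u₁ u₂ ?_, fun u₁ u₂ h₂₁ h₁ => h_lt u₁ u₂ ?_⟩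
  · rw [abs_of_pos h₁, abs_of_pos (h₁.trans h₁₂)]; exact h₁₂
  · rw [abs_of_neg h₁, abs_of_neg (h₂₁.trans h₁)]; exact neg_lt_neg h₂₁

/-- the convolution of two continuous, bounded, symmetric,
strictly unimodal probability densities is strictly unimodal at zero. -/
theorem convolution_strictly_unimodal
    (f₁ f₂ : ℝ → ℝ)
    (hc₁ : Continuous f₁) (hc₂ : Continuous f₂)
    (hb₁ : ∃ M, ∀ x, f₁ x ≤ M) (hb₂ : ∃ M, ∀ x, f₂ x ≤ M)
    (hnn₁ : ∀ x, 0 ≤ f₁ x) (hnn₂ : ∀ x, 0 ≤ f₂ x)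
    (hint₁ : ∫ x, f₁ x = 1) (hint₂ : ∫ x, f₂ x = 1)
    (hsym₁ : ∀ x, f₁ (-x) = f₁ x) (hsym₂ : ∀ x, f₂ (-x) = f₂ x)
    (hmono₁ : StrictMonoOn f₁ (Iic 0)) (hanti₁ : StrictAntiOn f₁ (Ici 0))
    (hmono₂ : StrictMonoOn f₂ (Iic 0)) (hanti₂ : StrictAntiOn f₂ (Ici 0)) :
    (∀ u₁ u₂ : ℝ, 0 < u₁ → u₁ < u₂ →
      (∫ v, f₁ v * f₂ (u₂ - v)) < ∫ v, f₁ v * f₂ (u₁ - v)) ∧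
    (∀ u₁ u₂ : ℝ, u₂ < u₁ → u₁ < 0 →
      (∫ v, f₁ v * f₂ (u₂ - v)) < ∫ v, f₁ v * f₂ (u₁ - v)) :=
  convolution_strictly_unimodal_general f₁ f₂ hc₂ hb₂ hnn₂ hint₁ hsym₁ hsym₂ hanti₁ hanti₂
end

section
/- Let f₁, f₂ : ℝ → ℝ be nonnegative integrable functions symmetric about zero and strictly unimodal at zero, and fix 0 < u₁ < u₂. Then ∫_{-∞}^{∞} f₁(v) (f₂(u₂ - v) - f₂(v - u₁)) dv = ∫_0^{∞} [f₁((u₂+u₁)/2 - v) - f₁((u₂+u₁)/2 + v)] · [f₂((u₂-u₁)/2 + v) - f₂((u₂-u₁)/2 - v)] dv, and this quantity is negative. -/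
/-!
Substituting `v = (u₂ + u₁)/2 + w` and folding the negative half-line onto the positive one
turns the integral into `∫_{w > 0} (f₁(m - w) - f₁(m + w)) (f₂(d + w) - f₂(d - w))` with
`m = (u₂ + u₁)/2 > 0`, `d = (u₂ - u₁)/2 > 0`. Since `|c - w| < c + w` for `c, w > 0`, an even
function strictly decreasing on `[0, ∞)` takes a larger value at `c - w` than at `c + w`, so the
integrand is strictly negative on `(0, ∞)`.
-/

open MeasureTheory Set

namespace Function.Even

variable {f : ℝ → ℝ}

theorem apply_abs_s1 (hf : Function.Even f) (x : ℝ) : f |x| = f x := by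
  rcases abs_choice x with h | h
  · rw [h]
  · rw [h]
    exact hf x

theorem measurable_of_antitoneOn (hf : Function.Even f) (hanti : AntitoneOn f (Ici 0)) :
    Measurable f := by
  have hmono : Antitone fun x => f (max x 0) := fun x y hxy =>
    hanti (le_max_right x 0) (le_max_right y 0) (max_le_max_right 0 hxy)
  convert hmono.measurable.comp measurable_abs using 1
  ext x
  simp [hf.apply_abs_s1]

theorem apply_le_apply_zero (hf : Function.Even f) (hanti : AntitoneOn f (Ici 0)) (x : ℝ) :
    f x ≤ f 0 := by
  rw [← hf.apply_abs_s1]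
  exact hanti self_mem_Ici (abs_nonneg x) (abs_nonneg x)

theorem apply_lt_apply_of_abs_lt (hf : Function.Even f) (hanti : StrictAntiOn f (Ici 0))
    {x y : ℝ} (h : |x| < |y|) : f y < f x := by
  rw [← hf.apply_abs_s1 x, ← hf.apply_abs_s1 y]
  exact hanti (abs_nonneg x) (abs_nonneg y) h

theorem apply_add_lt_apply_sub (hf : Function.Even f) (hanti : StrictAntiOn f (Ici 0))
    {c w : ℝ} (hc : 0 < c) (hw : 0 < w) : f (c + w) < f (c - w) := by
  refine hf.apply_lt_apply_of_abs_lt hanti ?_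
  rw [abs_of_pos (add_pos hc hw)]
  exact abs_lt.2 ⟨by linarith, by linarith⟩

end Function.Even

theorem MeasureTheory.Integrable.mul_apply_sub_sub_apply_sub {f g : ℝ → ℝ} (hf : Integrable f)
    (hg : Measurable g) {C : ℝ} (hC : ∀ x, |g x| ≤ C) (a b : ℝ) :
    Integrable fun v => f v * (g (a - v) - g (v - b)) := by
  refine hf.mul_bdd (c := C + C) ?_ (Filter.Eventually.of_forall fun v => ?_)
  · exact ((hg.comp (measurable_const.sub measurable_id)).sub
      (hg.comp (measurable_id.sub measurable_const))).aestronglyMeasurable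
  · exact (norm_sub_le _ _).trans (add_le_add (hC _) (hC _))

theorem integral_eq_integral_Ioi_comp_neg_add {E : Type*} [NormedAddCommGroup E]
    [NormedSpace ℝ E] {g : ℝ → E} (hg : Integrable g) :
    ∫ x, g x = ∫ x in Ioi 0, (g (-x) + g x) := by
  rw [integral_add hg.comp_neg.integrableOn hg.integrableOn, integral_comp_neg_Ioi, neg_zero,
    intervalIntegral.integral_Iic_add_Ioi hg.integrableOn hg.integrableOn]

theorem setIntegral_neg_of_forall_neg {α : Type*} [MeasurableSpace α] {μ : Measure α}
    {s : Set α} {f : α → ℝ} (hs : MeasurableSet s) (hμs : μ s ≠ 0) (hf : IntegrableOn f s μ)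
    (hneg : ∀ x ∈ s, f x < 0) : ∫ x in s, f x ∂μ < 0 := by
  have hnonneg : 0 ≤ᵐ[μ.restrict s] fun x => -f x :=
    (ae_restrict_iff' hs).2 (Filter.Eventually.of_forall fun x hx => (neg_pos.2 (hneg x hx)).le)
  have hsupp : Function.support (fun x => -f x) ∩ s = s :=
    inter_eq_right.2 fun x hx => (neg_pos.2 (hneg x hx)).ne'
  have hpos := (setIntegral_pos_iff_support_of_nonneg_ae hnonneg hf.neg).2
    (by rw [hsupp]; exact pos_iff_ne_zero.2 hμs)
  rw [integral_neg] at hpos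
  exact neg_pos.1 hpos

theorem convolution_difference_identity_and_neg_general
    (f₁ f₂ : ℝ → ℝ)
    (hnn₂ : ∀ x, 0 ≤ f₂ x)
    (hint₁ : Integrable f₁)
    (hsym₁ : ∀ x, f₁ (-x) = f₁ x) (hsym₂ : ∀ x, f₂ (-x) = f₂ x)
    (hanti₁ : StrictAntiOn f₁ (Ici 0))
    (hanti₂ : StrictAntiOn f₂ (Ici 0))
    (u₁ u₂ : ℝ) (hu₁ : 0 < u₁) (hu : u₁ < u₂) :
    (∫ v, f₁ v * (f₂ (u₂ - v) - f₂ (v - u₁))) =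
      (∫ v in Ioi (0 : ℝ),
        (f₁ ((u₂ + u₁) / 2 - v) - f₁ ((u₂ + u₁) / 2 + v)) *
          (f₂ ((u₂ - u₁) / 2 + v) - f₂ ((u₂ - u₁) / 2 - v))) ∧
    (∫ v, f₁ v * (f₂ (u₂ - v) - f₂ (v - u₁))) < 0 := by
  set F := fun v => f₁ v * (f₂ (u₂ - v) - f₂ (v - u₁))
  set H := fun v => (f₁ ((u₂ + u₁) / 2 - v) - f₁ ((u₂ + u₁) / 2 + v)) *
    (f₂ ((u₂ - u₁) / 2 + v) - f₂ ((u₂ - u₁) / 2 - v))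
  have hF : Integrable F := hint₁.mul_apply_sub_sub_apply_sub
    (Function.Even.measurable_of_antitoneOn hsym₂ hanti₂.antitoneOn)
    (fun x => (abs_of_nonneg (hnn₂ x)).trans_le (Function.Even.apply_le_apply_zero hsym₂ hanti₂.antitoneOn x))
    u₂ u₁
  have hG : Integrable fun w => F ((u₂ + u₁) / 2 + w) := hF.comp_add_left _
  have hfold : ∀ w, F ((u₂ + u₁) / 2 + -w) + F ((u₂ + u₁) / 2 + w) = H w := fun w => by
    simp only [F, H]
    ring_nf
  have hrepr : ∫ v, F v = ∫ v in Ioi 0, H v := by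
    rw [← integral_add_left_eq_self F ((u₂ + u₁) / 2), integral_eq_integral_Ioi_comp_neg_add hG]
    exact setIntegral_congr_fun measurableSet_Ioi fun w _ => hfold w
  have hH : IntegrableOn H (Ioi 0) :=
    (hG.comp_neg.add hG).integrableOn.congr_fun (fun w _ => hfold w) measurableSet_Ioi
  have hH_neg : ∀ w ∈ Ioi (0 : ℝ), H w < 0 := fun w hw =>
    mul_neg_of_pos_of_neg
      (sub_pos.2 (Function.Even.apply_add_lt_apply_sub hsym₁ hanti₁ (by linarith) hw))
      (sub_neg.2 (Function.Even.apply_add_lt_apply_sub hsym₂ hanti₂ (by linarith) hw))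
  refine ⟨hrepr, hrepr ▸ setIntegral_neg_of_forall_neg measurableSet_Ioi ?_ hH hH_neg⟩
  simp

/-- change-of-variables identity and negativity for the
difference of convolution values at `u₂` and `u₁`, for `0 < u₁ < u₂`. -/
theorem convolution_difference_identity_and_neg
    (f₁ f₂ : ℝ → ℝ)
    (hnn₁ : ∀ x, 0 ≤ f₁ x) (hnn₂ : ∀ x, 0 ≤ f₂ x)
    (hint₁ : Integrable f₁) (hint₂ : Integrable f₂)
    (hsym₁ : ∀ x, f₁ (-x) = f₁ x) (hsym₂ : ∀ x, f₂ (-x) = f₂ x)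
    (hmono₁ : StrictMonoOn f₁ (Iic 0)) (hanti₁ : StrictAntiOn f₁ (Ici 0))
    (hmono₂ : StrictMonoOn f₂ (Iic 0)) (hanti₂ : StrictAntiOn f₂ (Ici 0))
    (u₁ u₂ : ℝ) (hu₁ : 0 < u₁) (hu : u₁ < u₂) :
    (∫ v, f₁ v * (f₂ (u₂ - v) - f₂ (v - u₁))) =
      (∫ v in Ioi (0 : ℝ),
        (f₁ ((u₂ + u₁) / 2 - v) - f₁ ((u₂ + u₁) / 2 + v)) *
          (f₂ ((u₂ - u₁) / 2 + v) - f₂ ((u₂ - u₁) / 2 - v))) ∧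
    (∫ v, f₁ v * (f₂ (u₂ - v) - f₂ (v - u₁))) < 0 :=
  convolution_difference_identity_and_neg_general f₁ f₂ hnn₂ hint₁ hsym₁ hsym₂ hanti₁ hanti₂ u₁ u₂
    hu₁ hu
end

section
/- Let m : ℝ → ℝ be continuous such that for every compact interval [p,q] and every y, the level set {t ∈ [p,q] : m(t) = y} is finite. Let g and g₀ be continuous strictly increasing functions on an interval [c,d] agreeing at some point α, and suppose m(g(s)) = m(g₀(s)) for all s in [c,d]. Then g(s) = g₀(s) for all s ∈ [c,d]. -/
open Set

private lemma warp_aux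
    (m g g₀ : ℝ → ℝ) (c d : ℝ)
    (hfin : ∀ p q y : ℝ, {t : ℝ | t ∈ Icc p q ∧ m t = y}.Finite)
    (hgc : ContinuousOn g (Icc c d))
    (hgm : StrictMonoOn g (Icc c d)) (hg₀m : StrictMonoOn g₀ (Icc c d))
    (α : ℝ) (hα : α ∈ Icc c d) (hagree : g α = g₀ α)
    (heq : ∀ s ∈ Icc c d, m (g s) = m (g₀ s))
    (s₀ : ℝ) (hs₀ : s₀ ∈ Icc c d) (hlt : α < s₀) :
    ¬ g₀ s₀ < g s₀ := by
  intro hbad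
  set P : ℝ → Prop := fun s => s ∈ Ioc α s₀ ∧ g₀ s < g s with hP
  have memIcc : ∀ s, P s → s ∈ Icc c d := by
    rintro s ⟨⟨h1, h2⟩, _⟩
    exact ⟨le_trans hα.1 h1.le, le_trans h2 hs₀.2⟩
  have step : ∀ s, P s → ∃ s', P s' ∧ s' < s ∧ g s' = g₀ s := by
    rintro s hs
    have hsIcc : s ∈ Icc c d := memIcc s hs
    obtain ⟨⟨hαs, hss₀⟩, hgs⟩ := hs
    have hsub : Icc α s ⊆ Icc c d := Icc_subset_Icc hα.1 hsIcc.2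
    have h1 : g α < g₀ s := by
      rw [hagree]; exact hg₀m hα hsIcc hαs
    have h2 : g₀ s ∈ Ioo (g α) (g s) := ⟨h1, hgs⟩
    have := intermediate_value_Ioo hαs.le (hgc.mono hsub)
    obtain ⟨s', hs'mem, hgs'⟩ := this h2
    have hs'Icc : s' ∈ Icc c d :=
      ⟨le_trans hα.1 hs'mem.1.le, le_trans hs'mem.2.le hsIcc.2⟩
    refine ⟨s', ⟨⟨hs'mem.1, hs'mem.2.le.trans hss₀⟩, ?_⟩, hs'mem.2, hgs'⟩
    rw [hgs']
    exact hg₀m hs'Icc hsIcc hs'mem.2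
  classical
  have hP0 : P s₀ := ⟨⟨hlt, le_rfl⟩, hbad⟩
  let f : {s // P s} → {s // P s} := fun x => ⟨(step x.1 x.2).choose, (step x.1 x.2).choose_spec.1⟩
  let seq : ℕ → {s // P s} := fun n => f^[n] ⟨s₀, hP0⟩
  have hseq_succ : ∀ n, seq (n + 1) = f (seq n) := by
    intro n
    simp only [seq, Function.iterate_succ_apply']
  have hdec : ∀ n, (seq (n+1)).1 < (seq n).1 := by
    intro n
    rw [hseq_succ]
    exact (step _ (seq n).2).choose_spec.2.1
  have hgval : ∀ n, g (seq (n+1)).1 = g₀ (seq n).1 := by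
    intro n
    rw [hseq_succ]
    exact (step _ (seq n).2).choose_spec.2.2
  have hm_const : ∀ n, m (g (seq n).1) = m (g s₀) := by
    intro n
    induction n with
    | zero => rfl
    | succ k ih =>
      rw [hgval k, ← heq _ (memIcc _ (seq k).2), ih]
  have hmono : StrictAnti (fun n => (seq n).1) :=
    strictAnti_nat_of_succ_lt hdec
  have hinj : Function.Injective (fun n => g (seq n).1) := by
    intro a b hab
    by_contra hne
    rcases lt_or_gt_of_ne hne with h | h
    · exact absurd hab (ne_of_gt (hgm (memIcc _ (seq b).2) (memIcc _ (seq a).2) (hmono h)))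
    · exact absurd hab (ne_of_lt (hgm (memIcc _ (seq a).2) (memIcc _ (seq b).2) (hmono h)))
  have hmem : ∀ n, g (seq n).1 ∈ {t : ℝ | t ∈ Icc (g α) (g s₀) ∧ m t = m (g s₀)} := by
    intro n
    have h1 : (seq n).1 ∈ Icc c d := memIcc _ (seq n).2
    refine ⟨⟨?_, ?_⟩, hm_const n⟩
    · exact (hgm.monotoneOn hα h1 (seq n).2.1.1.le)
    · exact (hgm.monotoneOn h1 hs₀ (seq n).2.1.2)
  exact (hfin (g α) (g s₀) (m (g s₀))).not_infinite
    (Set.infinite_of_injective_forall_mem hinj hmem)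

/-- identifiability. If `m` is continuous with finite level sets on
compact intervals and `g`, `g₀` are continuous strictly increasing on `[c,d]`,
agree at one point, and `m ∘ g = m ∘ g₀` on `[c,d]`, then `g = g₀` on `[c,d]`. -/
theorem warping_identifiability
    (m g g₀ : ℝ → ℝ) (c d : ℝ)
    (hm : Continuous m)
    (hfin : ∀ p q y : ℝ, {t : ℝ | t ∈ Icc p q ∧ m t = y}.Finite)
    (hgc : ContinuousOn g (Icc c d)) (hg₀c : ContinuousOn g₀ (Icc c d))
    (hgm : StrictMonoOn g (Icc c d)) (hg₀m : StrictMonoOn g₀ (Icc c d))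
    (α : ℝ) (hα : α ∈ Icc c d) (hagree : g α = g₀ α)
    (heq : ∀ s ∈ Icc c d, m (g s) = m (g₀ s)) :
    ∀ s ∈ Icc c d, g s = g₀ s := by
  -- reflected data
  set M : ℝ → ℝ := fun x => m (-x) with hM
  set G : ℝ → ℝ := fun s => -g (-s) with hG
  set G₀ : ℝ → ℝ := fun s => -g₀ (-s) with hG₀
  have hMfin : ∀ p q y : ℝ, {t : ℝ | t ∈ Icc p q ∧ M t = y}.Finite := by
    intro p q y
    apply Set.Finite.subset ((hfin (-q) (-p) y).image (fun t => -t))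
    rintro t ⟨⟨h1, h2⟩, h3⟩
    exact ⟨-t, ⟨⟨neg_le_neg h2, neg_le_neg h1⟩, h3⟩, neg_neg t⟩
  have hnegmaps : MapsTo (fun s : ℝ => -s) (Icc (-d) (-c)) (Icc c d) := by
    rintro s ⟨h1, h2⟩
    exact ⟨le_neg_of_le_neg h2, neg_le_of_neg_le h1⟩
  have hGc : ContinuousOn G (Icc (-d) (-c)) :=
    ((hgc.comp continuousOn_neg hnegmaps).neg)
  have hG₀c : ContinuousOn G₀ (Icc (-d) (-c)) :=
    ((hg₀c.comp continuousOn_neg hnegmaps).neg)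
  have hGm : StrictMonoOn G (Icc (-d) (-c)) := by
    intro a ha b hb hab
    exact neg_lt_neg (hgm (hnegmaps hb) (hnegmaps ha) (neg_lt_neg hab))
  have hG₀m : StrictMonoOn G₀ (Icc (-d) (-c)) := by
    intro a ha b hb hab
    exact neg_lt_neg (hg₀m (hnegmaps hb) (hnegmaps ha) (neg_lt_neg hab))
  have hαneg : -α ∈ Icc (-d) (-c) := ⟨neg_le_neg hα.2, neg_le_neg hα.1⟩
  have hGagree : G (-α) = G₀ (-α) := by
    simp only [hG, hG₀, neg_neg, hagree]
  have hMeq : ∀ s ∈ Icc (-d) (-c), M (G s) = M (G₀ s) := by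
    intro s hs
    simp only [hM, hG, hG₀, neg_neg]
    exact heq _ (hnegmaps hs)
  intro s hs
  rcases lt_trichotomy s α with h | h | h
  · -- reflect: -s > -α
    have hsneg : -s ∈ Icc (-d) (-c) := ⟨neg_le_neg hs.2, neg_le_neg hs.1⟩
    have h1 := warp_aux M G G₀ (-d) (-c) hMfin hGc hGm hG₀m (-α) hαneg hGagree hMeq
      (-s) hsneg (neg_lt_neg h)
    have h2 := warp_aux M G₀ G (-d) (-c) hMfin hG₀c hG₀m hGm (-α) hαneg hGagree.symm
      (fun t ht => (hMeq t ht).symm) (-s) hsneg (neg_lt_neg h)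
    simp only [hG, hG₀, neg_neg, not_lt, neg_le_neg_iff] at h1 h2
    exact le_antisymm h2 h1
  · rw [h, hagree]
  · have h1 := warp_aux m g g₀ c d hfin hgc hgm hg₀m α hα hagree heq s hs h
    have h2 := warp_aux m g₀ g c d hfin hg₀c hg₀m hgm α hα hagree.symm
      (fun t ht => (heq t ht).symm) s hs h
    exact le_antisymm (not_lt.1 h1) (not_lt.1 h2)
end

section
/- Let m : ℝ → ℝ be continuous, let g, g₀ be continuous strictly increasing functions on [α, s] with g(α) = g₀(α) and g(s) < g₀(s), and suppose m has finitely many level points on every compact interval. If t⁽¹⁾ < ⋯ < t⁽ᵏ⁾ are the ordered elements of {t ∈ [g₀(α), g₀(s)] : m(t) = m(g₀(s))}, with g(s) = t⁽ⁱ⁾ for some i < k and g₀(s) = t⁽ᵏ⁾, then the function u ↦ m(g(u)) − m(g(s)) has exactly i zeros on [α, s] while u ↦ m(g₀(u)) − m(g₀(s)) has exactly k zeros on [α, s]; in particular the two functions cannot coincide on [α, s]. -/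
open Set

lemma zero_counting_aux (m f : ℝ → ℝ) (α s : ℝ) (hαs : α ≤ s)
    (hfc : ContinuousOn f (Icc α s)) (hfm : StrictMonoOn f (Icc α s)) :
    {u : ℝ | u ∈ Icc α s ∧ m (f u) - m (f s) = 0}.ncard
      = {x : ℝ | x ∈ Icc (f α) (f s) ∧ m x = m (f s)}.ncard := by
  have himg : f '' {u : ℝ | u ∈ Icc α s ∧ m (f u) - m (f s) = 0}
      = {x : ℝ | x ∈ Icc (f α) (f s) ∧ m x = m (f s)} := by
    ext x
    constructor
    · rintro ⟨u, ⟨hu, hmu⟩, rfl⟩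
      refine ⟨⟨hfm.monotoneOn (left_mem_Icc.2 hαs) hu hu.1,
        hfm.monotoneOn hu (right_mem_Icc.2 hαs) hu.2⟩, by linarith [hmu]⟩
    · rintro ⟨hx, hmx⟩
      obtain ⟨u, hu, rfl⟩ := intermediate_value_Icc hαs hfc hx
      exact ⟨u, ⟨hu, by linarith [hmx]⟩, rfl⟩
  rw [← himg]
  exact (Set.ncard_image_of_injOn (hfm.injOn.mono (fun u hu => hu.1))).symm

/-- zero-counting argument. -/
theorem zero_counting
    (m g g₀ : ℝ → ℝ) (α s : ℝ) (hαs : α < s)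
    (hm : Continuous m)
    (hfin : ∀ p q y : ℝ, {x : ℝ | x ∈ Icc p q ∧ m x = y}.Finite)
    (hgc : ContinuousOn g (Icc α s)) (hg₀c : ContinuousOn g₀ (Icc α s))
    (hgm : StrictMonoOn g (Icc α s)) (hg₀m : StrictMonoOn g₀ (Icc α s))
    (hagree : g α = g₀ α) (hlt : g s < g₀ s)
    (k : ℕ) (hk : 0 < k) (t : Fin k → ℝ) (ht : StrictMono t)
    (hrange : Set.range t = {x : ℝ | x ∈ Icc (g₀ α) (g₀ s) ∧ m x = m (g₀ s)})
    (j : Fin k) (hj : (j : ℕ) + 1 < k)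
    (hgs : g s = t j) (hg₀s : g₀ s = t ⟨k - 1, by omega⟩) :
    {u : ℝ | u ∈ Icc α s ∧ m (g u) - m (g s) = 0}.ncard = (j : ℕ) + 1 ∧
    {u : ℝ | u ∈ Icc α s ∧ m (g₀ u) - m (g₀ s) = 0}.ncard = k ∧
    ¬ Set.EqOn (fun u => m (g u) - m (g s)) (fun u => m (g₀ u) - m (g₀ s))
        (Icc α s) := by
  have htj : m (t j) = m (g₀ s) := by
    have : t j ∈ Set.range t := ⟨j, rfl⟩
    rw [hrange] at this; exact this.2
  have hlevel : m (g s) = m (g₀ s) := by rw [hgs]; exact htj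
  -- level set for g
  have hL : {x : ℝ | x ∈ Icc (g α) (g s) ∧ m x = m (g s)} = t '' (Set.Iic j) := by
    ext x
    constructor
    · rintro ⟨hx, hmx⟩
      have hx' : x ∈ Set.range t := by
        rw [hrange]
        exact ⟨⟨by rw [← hagree]; exact hx.1, le_trans hx.2 hlt.le⟩,
          by rw [← hlevel]; exact hmx⟩
      obtain ⟨i, rfl⟩ := hx'
      have : t i ≤ t j := by rw [← hgs]; exact hx.2
      exact ⟨i, ht.le_iff_le.mp this, rfl⟩
    · rintro ⟨i, hi, rfl⟩
      have hmem : t i ∈ Set.range t := ⟨i, rfl⟩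
      rw [hrange] at hmem
      refine ⟨⟨by rw [hagree]; exact hmem.1.1, by rw [hgs]; exact ht.monotone hi⟩,
        by rw [hlevel]; exact hmem.2⟩
  have hinjt : Function.Injective t := ht.injective
  have h1 : {u : ℝ | u ∈ Icc α s ∧ m (g u) - m (g s) = 0}.ncard = (j : ℕ) + 1 := by
    rw [zero_counting_aux m g α s hαs.le hgc hgm, hL,
      Set.ncard_image_of_injective _ hinjt, ← Finset.coe_Iic, Set.ncard_coe_finset,
      Fin.card_Iic]
  have h2 : {u : ℝ | u ∈ Icc α s ∧ m (g₀ u) - m (g₀ s) = 0}.ncard = k := by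
    rw [zero_counting_aux m g₀ α s hαs.le hg₀c hg₀m, ← hrange, ← Set.image_univ,
      Set.ncard_image_of_injective _ hinjt, Set.ncard_univ, Nat.card_eq_fintype_card,
      Fintype.card_fin]
  refine ⟨h1, h2, fun heq => ?_⟩
  have hsets : {u : ℝ | u ∈ Icc α s ∧ m (g u) - m (g s) = 0}
      = {u : ℝ | u ∈ Icc α s ∧ m (g₀ u) - m (g₀ s) = 0} := by
    ext u
    constructor
    · rintro ⟨hu, h0⟩
      have := heq hu
      simp only at this
      exact ⟨hu, by linarith⟩
    · rintro ⟨hu, h0⟩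
      have := heq hu
      simp only at this
      exact ⟨hu, by linarith⟩
  rw [hsets, h2] at h1
  omega
end

section
/- Suppose K₁, K₂ : ℝ → ℝ are kernels satisfying 0 < c ≤ Kᵢ(x) and |Kᵢ'(x)| ≤ M_K' for all x (i = 1,2). For data points tᵢ, sⱼ, y₁ᵢ, y₂ⱼ and bandwidths h_t, h_y > 0, define Nₙ(g) = (n₁n₂h_t h_y)⁻¹ Σᵢ Σⱼ K₁((tᵢ − g(sⱼ))/h_t) K₂((y₁ᵢ − y₂ⱼ)/h_y), Dₙ(g) = (n₁n₂h_t)⁻¹ Σᵢ Σⱼ K₁((tᵢ − g(sⱼ))/h_t), and Lₙ(g) = Nₙ(g)/Dₙ(g). Then for any two functions g, g̃ on [c,d], |Lₙ(g̃) − Lₙ(g)| ≤ c⁻² M_K' (Nₙ(g̃) + Uₙ Dₙ(g̃)) · ‖g − g̃‖_∞, where Uₙ = (n₁n₂h_y)⁻¹ Σᵢ Σⱼ K₂((y₁ᵢ − y₂ⱼ)/h_y). -/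
open Set

noncomputable section

/-- Kernel-matched numerator `Nₙ(g)`. -/
def Nn (n₁ n₂ : ℕ) (t y₁ : Fin n₁ → ℝ) (s y₂ : Fin n₂ → ℝ)
    (ht hy : ℝ) (K₁ K₂ : ℝ → ℝ) (g : ℝ → ℝ) : ℝ :=
  ((n₁ : ℝ) * n₂ * ht * hy)⁻¹ *
    ∑ i : Fin n₁, ∑ j : Fin n₂,
      K₁ ((t i - g (s j)) / ht) * K₂ ((y₁ i - y₂ j) / hy)

/-- Kernel-matched denominator `Dₙ(g)`. -/
def Dn (n₁ n₂ : ℕ) (t : Fin n₁ → ℝ) (s : Fin n₂ → ℝ)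
    (ht : ℝ) (K₁ : ℝ → ℝ) (g : ℝ → ℝ) : ℝ :=
  ((n₁ : ℝ) * n₂ * ht)⁻¹ *
    ∑ i : Fin n₁, ∑ j : Fin n₂, K₁ ((t i - g (s j)) / ht)

/-- The criterion `Lₙ(g) = Nₙ(g) / Dₙ(g)`. -/
def Ln (n₁ n₂ : ℕ) (t y₁ : Fin n₁ → ℝ) (s y₂ : Fin n₂ → ℝ)
    (ht hy : ℝ) (K₁ K₂ : ℝ → ℝ) (g : ℝ → ℝ) : ℝ :=
  Nn n₁ n₂ t y₁ s y₂ ht hy K₁ K₂ g / Dn n₁ n₂ t s ht K₁ g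

/-- `Uₙ`. -/
def Un (n₁ n₂ : ℕ) (y₁ : Fin n₁ → ℝ) (y₂ : Fin n₂ → ℝ)
    (hy : ℝ) (K₂ : ℝ → ℝ) : ℝ :=
  ((n₁ : ℝ) * n₂ * hy)⁻¹ *
    ∑ i : Fin n₁, ∑ j : Fin n₂, K₂ ((y₁ i - y₂ j) / hy)

private lemma lip_of_deriv_bound (f : ℝ → ℝ) (hf : Differentiable ℝ f) (M : ℝ)
    (hM : ∀ x, |deriv f x| ≤ M) (a b : ℝ) : |f a - f b| ≤ M * |a - b| := by
  have h := Convex.norm_image_sub_le_of_norm_deriv_le (f := f) (s := univ)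
    (fun x _ => hf x) (fun x _ => by simpa [Real.norm_eq_abs] using hM x)
    convex_univ (mem_univ b) (mem_univ a)
  simpa [Real.norm_eq_abs] using h

private lemma abs_double_sum_le {n₁ n₂ : ℕ} (f h : Fin n₁ → Fin n₂ → ℝ) (C : ℝ)
    (hf : ∀ i j, |f i j| ≤ C) (hh : ∀ i j, 0 ≤ h i j) :
    |∑ i, ∑ j, f i j * h i j| ≤ C * ∑ i, ∑ j, h i j := by
  calc |∑ i, ∑ j, f i j * h i j| ≤ ∑ i, ∑ j, |f i j * h i j| :=
        (Finset.abs_sum_le_sum_abs _ _).trans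
          (Finset.sum_le_sum fun i _ => Finset.abs_sum_le_sum_abs _ _)
    _ ≤ ∑ i, ∑ j, C * h i j := by
        refine Finset.sum_le_sum fun i _ => Finset.sum_le_sum fun j _ => ?_
        rw [abs_mul, abs_of_nonneg (hh i j)]
        exact mul_le_mul_of_nonneg_right (hf i j) (hh i j)
    _ = C * ∑ i, ∑ j, h i j := by simp [Finset.mul_sum]

private lemma final_arith (N Nt D Dt U S M c₀ ht : ℝ)
    (hc₀ : 0 < c₀) (hht : 0 < ht) (hM : 0 ≤ M) (hS : 0 ≤ S)
    (hNt : 0 ≤ Nt) (hU : 0 ≤ U)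
    (hD : c₀ / ht ≤ D) (hDt : c₀ / ht ≤ Dt)
    (hN : |Nt - N| ≤ M * S / ht ^ 2 * U)
    (hDd : |D - Dt| ≤ M * S / ht ^ 2) :
    |Nt / Dt - N / D| ≤ c₀⁻¹ * c₀⁻¹ * M * (Nt + U * Dt) * S := by
  have hcht : 0 < c₀ / ht := by positivity
  have hDpos : 0 < D := hcht.trans_le hD
  have hDtpos : 0 < Dt := hcht.trans_le hDt
  have hdecomp : Nt / Dt - N / D = (Nt - N) / D + Nt * (D - Dt) / (Dt * D) := by
    field_simp
    ring
  have h1 : |(Nt - N) / D| ≤ (M * S / ht ^ 2 * U) / (c₀ / ht) := by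
    rw [abs_div, abs_of_pos hDpos]
    exact div_le_div₀ (by positivity) hN hcht hD
  have h2 : |Nt * (D - Dt) / (Dt * D)| ≤ Nt * (M * S / ht ^ 2) / ((c₀ / ht) * (c₀ / ht)) := by
    rw [abs_div, abs_of_pos (mul_pos hDtpos hDpos), abs_mul, abs_of_nonneg hNt]
    exact div_le_div₀ (by positivity) (mul_le_mul_of_nonneg_left hDd hNt)
      (by positivity) (mul_le_mul hDt hD hcht.le hDtpos.le)
  calc |Nt / Dt - N / D| = |(Nt - N) / D + Nt * (D - Dt) / (Dt * D)| := by rw [hdecomp]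
    _ ≤ |(Nt - N) / D| + |Nt * (D - Dt) / (Dt * D)| := abs_add_le _ _
    _ ≤ (M * S / ht ^ 2 * U) / (c₀ / ht) + Nt * (M * S / ht ^ 2) / ((c₀ / ht) * (c₀ / ht)) :=
        add_le_add h1 h2
    _ = c₀⁻¹ * c₀⁻¹ * M * (Nt + U * (c₀ / ht)) * S := by field_simp; ring
    _ ≤ c₀⁻¹ * c₀⁻¹ * M * (Nt + U * Dt) * S := by gcongr

/-- stochastic Lipschitz (oscillation) bound for the kernel
alignment criterion: `|Lₙ(g̃) − Lₙ(g)| ≤ c₀⁻² M (Nₙ(g̃) + Uₙ Dₙ(g̃)) ‖g − g̃‖_∞`,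
where the sup norm is over `[c,d]`. -/
theorem Ln_oscillation_bound
    (n₁ n₂ : ℕ) (hn₁ : 0 < n₁) (hn₂ : 0 < n₂)
    (t y₁ : Fin n₁ → ℝ) (s y₂ : Fin n₂ → ℝ)
    (ht hy : ℝ) (hht : 0 < ht) (hhy : 0 < hy)
    (K₁ K₂ : ℝ → ℝ) (c₀ M : ℝ) (hc₀ : 0 < c₀)
    (hK₁lb : ∀ x, c₀ ≤ K₁ x) (hK₂lb : ∀ x, c₀ ≤ K₂ x)
    (hK₁d : Differentiable ℝ K₁) (hK₂d : Differentiable ℝ K₂)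
    (hK₁' : ∀ x, |deriv K₁ x| ≤ M) (hK₂' : ∀ x, |deriv K₂ x| ≤ M)
    (c d : ℝ) (hcd : c ≤ d) (hs : ∀ j, s j ∈ Icc c d)
    (g gt : ℝ → ℝ)
    (hg : ContinuousOn g (Icc c d)) (hgt : ContinuousOn gt (Icc c d)) :
    |Ln n₁ n₂ t y₁ s y₂ ht hy K₁ K₂ gt - Ln n₁ n₂ t y₁ s y₂ ht hy K₁ K₂ g| ≤
      c₀⁻¹ * c₀⁻¹ * M *
        (Nn n₁ n₂ t y₁ s y₂ ht hy K₁ K₂ gt +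
          Un n₁ n₂ y₁ y₂ hy K₂ * Dn n₁ n₂ t s ht K₁ gt) *
        (⨆ x : Icc c d, |g x - gt x|) := by
  classical
  have hn₁p : (0:ℝ) < n₁ := Nat.cast_pos.2 hn₁
  have hn₂p : (0:ℝ) < n₂ := Nat.cast_pos.2 hn₂
  have hM0 : 0 ≤ M := (abs_nonneg _).trans (hK₁' 0)
  have hK₁0 : ∀ x, 0 ≤ K₁ x := fun x => hc₀.le.trans (hK₁lb x)
  have hK₂0 : ∀ x, 0 ≤ K₂ x := fun x => hc₀.le.trans (hK₂lb x)
  set S := ⨆ x : Icc c d, |g x - gt x| with hSdef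
  have hbdd : BddAbove (range fun x : Icc c d => |g ↑x - gt ↑x|) := by
    have hcont : ContinuousOn (fun x => |g x - gt x|) (Icc c d) := (hg.sub hgt).abs
    have himg : BddAbove ((fun x => |g x - gt x|) '' Icc c d) :=
      (isCompact_Icc.image_of_continuousOn hcont).bddAbove
    rwa [Set.image_eq_range] at himg
  have hSle : ∀ j, |g (s j) - gt (s j)| ≤ S := fun j => le_ciSup hbdd ⟨s j, hs j⟩
  have hS0 : 0 ≤ S := (abs_nonneg _).trans (le_ciSup hbdd ⟨c, left_mem_Icc.2 hcd⟩)
  -- pointwise Lipschitz bound on K₁ differences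
  have hK₁diff : ∀ i j,
      |K₁ ((t i - gt (s j)) / ht) - K₁ ((t i - g (s j)) / ht)| ≤ M * S / ht := by
    intro i j
    have h1 := lip_of_deriv_bound K₁ hK₁d M hK₁' ((t i - gt (s j)) / ht) ((t i - g (s j)) / ht)
    have h2 : |(t i - gt (s j)) / ht - (t i - g (s j)) / ht| = |g (s j) - gt (s j)| / ht := by
      rw [div_sub_div_same, abs_div, abs_of_pos hht]
      congr 1
      ring_nf
    calc |K₁ ((t i - gt (s j)) / ht) - K₁ ((t i - g (s j)) / ht)|
        ≤ M * (|g (s j) - gt (s j)| / ht) := by rw [← h2]; exact h1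
      _ ≤ M * (S / ht) := by gcongr; exact hSle j
      _ = M * S / ht := by ring
  -- lower bound on denominators
  have hDlb : ∀ g' : ℝ → ℝ, c₀ / ht ≤ Dn n₁ n₂ t s ht K₁ g' := by
    intro g'
    have h1 : (n₁:ℝ) * n₂ * c₀ ≤ ∑ i : Fin n₁, ∑ j : Fin n₂, K₁ ((t i - g' (s j)) / ht) := by
      calc (n₁:ℝ) * n₂ * c₀ = ∑ _i : Fin n₁, ∑ _j : Fin n₂, c₀ := by
            simp [Finset.sum_const, mul_assoc]
        _ ≤ _ := Finset.sum_le_sum fun i _ => Finset.sum_le_sum fun j _ => hK₁lb _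
    calc c₀ / ht = ((n₁:ℝ) * n₂ * ht)⁻¹ * ((n₁:ℝ) * n₂ * c₀) := by field_simp
      _ ≤ Dn n₁ n₂ t s ht K₁ g' := mul_le_mul_of_nonneg_left h1 (by positivity)
  -- nonnegativity
  have hNt0 : 0 ≤ Nn n₁ n₂ t y₁ s y₂ ht hy K₁ K₂ gt := by
    unfold Nn
    exact mul_nonneg (by positivity)
      (Finset.sum_nonneg fun i _ => Finset.sum_nonneg fun j _ =>
        mul_nonneg (hK₁0 _) (hK₂0 _))
  have hU0 : 0 ≤ Un n₁ n₂ y₁ y₂ hy K₂ := by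
    unfold Un
    exact mul_nonneg (by positivity)
      (Finset.sum_nonneg fun i _ => Finset.sum_nonneg fun j _ => hK₂0 _)
  -- numerator difference bound
  have hNd : |Nn n₁ n₂ t y₁ s y₂ ht hy K₁ K₂ gt - Nn n₁ n₂ t y₁ s y₂ ht hy K₁ K₂ g|
      ≤ M * S / ht ^ 2 * Un n₁ n₂ y₁ y₂ hy K₂ := by
    have hrw : Nn n₁ n₂ t y₁ s y₂ ht hy K₁ K₂ gt - Nn n₁ n₂ t y₁ s y₂ ht hy K₁ K₂ g
        = ((n₁:ℝ) * n₂ * ht * hy)⁻¹ *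
          ∑ i : Fin n₁, ∑ j : Fin n₂,
            (K₁ ((t i - gt (s j)) / ht) - K₁ ((t i - g (s j)) / ht)) *
              K₂ ((y₁ i - y₂ j) / hy) := by
      unfold Nn
      rw [← mul_sub, ← Finset.sum_sub_distrib]
      congr 1
      refine Finset.sum_congr rfl fun i _ => ?_
      rw [← Finset.sum_sub_distrib]
      exact Finset.sum_congr rfl fun j _ => by ring
    rw [hrw, abs_mul, abs_of_nonneg (show (0:ℝ) ≤ ((n₁:ℝ) * n₂ * ht * hy)⁻¹ by positivity)]
    have hb := abs_double_sum_le
      (fun i j => K₁ ((t i - gt (s j)) / ht) - K₁ ((t i - g (s j)) / ht))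
      (fun i j => K₂ ((y₁ i - y₂ j) / hy)) (M * S / ht) hK₁diff (fun i j => hK₂0 _)
    refine (mul_le_mul_of_nonneg_left hb (by positivity)).trans (le_of_eq ?_)
    unfold Un
    ring
  -- denominator difference bound
  have hDd : |Dn n₁ n₂ t s ht K₁ g - Dn n₁ n₂ t s ht K₁ gt| ≤ M * S / ht ^ 2 := by
    rw [abs_sub_comm]
    have hrw : Dn n₁ n₂ t s ht K₁ gt - Dn n₁ n₂ t s ht K₁ g
        = ((n₁:ℝ) * n₂ * ht)⁻¹ *
          ∑ i : Fin n₁, ∑ j : Fin n₂,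
            (K₁ ((t i - gt (s j)) / ht) - K₁ ((t i - g (s j)) / ht)) := by
      unfold Dn
      rw [← mul_sub, ← Finset.sum_sub_distrib]
      congr 1
      refine Finset.sum_congr rfl fun i _ => ?_
      rw [← Finset.sum_sub_distrib]
    rw [hrw, abs_mul, abs_of_nonneg (show (0:ℝ) ≤ ((n₁:ℝ) * n₂ * ht)⁻¹ by positivity)]
    have hb := abs_double_sum_le
      (fun i j => K₁ ((t i - gt (s j)) / ht) - K₁ ((t i - g (s j)) / ht))
      (fun _ _ => (1:ℝ)) (M * S / ht) hK₁diff (fun _ _ => zero_le_one)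
    simp only [mul_one, Finset.sum_const, Finset.card_univ, Fintype.card_fin,
      nsmul_eq_mul] at hb
    refine (mul_le_mul_of_nonneg_left hb (by positivity)).trans (le_of_eq ?_)
    field_simp
  exact final_arith (Nn n₁ n₂ t y₁ s y₂ ht hy K₁ K₂ g) (Nn n₁ n₂ t y₁ s y₂ ht hy K₁ K₂ gt)
    (Dn n₁ n₂ t s ht K₁ g) (Dn n₁ n₂ t s ht K₁ gt) (Un n₁ n₂ y₁ y₂ hy K₂) S M c₀ ht
    hc₀ hht hM0 hS0 hNt0 hU0 (hDlb g) (hDlb gt) hNd hDd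

end
end

section
/- Let g and g₀ be continuous functions on [c,d] that agree on S_g ∩ S_{g₀}, where S_g = g⁻¹([a,b]) ∩ [c,d] and S_{g₀} = g₀⁻¹([a,b]) ∩ [c,d], and suppose g, g₀ are strictly increasing and S_g ∩ S_{g₀} contains a nonempty open interval. Then S_g = S_{g₀}. -/
open Set

private lemma effective_domains_subset
    (a b c d : ℝ)
    (g g₀ : ℝ → ℝ)
    (hg₀c : ContinuousOn g₀ (Icc c d))
    (hgm : StrictMonoOn g (Icc c d)) (hg₀m : StrictMonoOn g₀ (Icc c d))
    (hagree : ∀ x ∈ (g ⁻¹' (Icc a b) ∩ Icc c d) ∩ (g₀ ⁻¹' (Icc a b) ∩ Icc c d),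
      g x = g₀ x)
    (hopen : ∃ p q : ℝ, p < q ∧
      Ioo p q ⊆ (g ⁻¹' (Icc a b) ∩ Icc c d) ∩ (g₀ ⁻¹' (Icc a b) ∩ Icc c d)) :
    g ⁻¹' (Icc a b) ∩ Icc c d ⊆ g₀ ⁻¹' (Icc a b) ∩ Icc c d := by
  obtain ⟨p, q, hpq, hsub⟩ := hopen
  have htmem : (p + q) / 2 ∈ Ioo p q := ⟨by linarith, by linarith⟩
  set t := (p + q) / 2 with htdef
  obtain ⟨⟨hgt, htcd⟩, ⟨hg₀t, -⟩⟩ := hsub htmem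
  rw [mem_preimage, mem_Icc] at hgt hg₀t
  rintro x ⟨hgx, hxcd⟩
  rw [mem_preimage, mem_Icc] at hgx
  refine ⟨?_, hxcd⟩
  rw [mem_preimage, mem_Icc]
  rcases le_total t x with hle | hle
  · refine ⟨hg₀t.1.trans (hg₀m.monotoneOn htcd hxcd hle), ?_⟩
    by_contra hb
    push_neg at hb
    have hIcc : Icc t x ⊆ Icc c d := Icc_subset_Icc htcd.1 hxcd.2
    obtain ⟨y, hy, hgy⟩ := intermediate_value_Icc hle (hg₀c.mono hIcc)
      ⟨hg₀t.2, hb.le⟩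
    have hycd : y ∈ Icc c d := hIcc hy
    have hgym : g y ∈ Icc a b := ⟨hgt.1.trans (hgm.monotoneOn htcd hycd hy.1),
      (hgm.monotoneOn hycd hxcd hy.2).trans hgx.2⟩
    have heq : g y = g₀ y := hagree y ⟨⟨hgym, hycd⟩,
      ⟨by rw [mem_preimage, hgy]; exact ⟨hgt.1.trans hgt.2, le_refl b⟩, hycd⟩⟩
    have hyx : y < x := by
      rcases lt_or_ge y x with h | h
      · exact h
      · have := hg₀m.monotoneOn hxcd hycd h
        rw [hgy] at this; linarith
    have := hgm hycd hxcd hyx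
    rw [heq, hgy] at this
    linarith [hgx.2]
  · refine ⟨?_, (hg₀m.monotoneOn hxcd htcd hle).trans hg₀t.2⟩
    by_contra hb
    push_neg at hb
    have hIcc : Icc x t ⊆ Icc c d := Icc_subset_Icc hxcd.1 htcd.2
    obtain ⟨y, hy, hgy⟩ := intermediate_value_Icc hle (hg₀c.mono hIcc)
      ⟨hb.le, hg₀t.1⟩
    have hycd : y ∈ Icc c d := hIcc hy
    have hgym : g y ∈ Icc a b := ⟨hgx.1.trans (hgm.monotoneOn hxcd hycd hy.1),
      (hgm.monotoneOn hycd htcd hy.2).trans hgt.2⟩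
    have heq : g y = g₀ y := hagree y ⟨⟨hgym, hycd⟩,
      ⟨by rw [mem_preimage, hgy]; exact ⟨le_refl a, hgt.1.trans hgt.2⟩, hycd⟩⟩
    have hxy : x < y := by
      rcases lt_or_ge x y with h | h
      · exact h
      · have := hg₀m.monotoneOn hycd hxcd h
        rw [hgy] at this; linarith
    have := hgm hxcd hycd hxy
    rw [heq, hgy] at this
    linarith [hgx.1]

/-- if two continuous strictly increasing warping functions agree
on the intersection of their effective domains `S_g = g⁻¹([a,b]) ∩ [c,d]` and
`S_{g₀} = g₀⁻¹([a,b]) ∩ [c,d]`, and this intersection contains a nonempty open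
interval, then the effective domains coincide. -/
theorem effective_domains_coincide
    (a b c d : ℝ)
    (g g₀ : ℝ → ℝ)
    (hgc : ContinuousOn g (Icc c d)) (hg₀c : ContinuousOn g₀ (Icc c d))
    (hgm : StrictMonoOn g (Icc c d)) (hg₀m : StrictMonoOn g₀ (Icc c d))
    (hagree : ∀ x ∈ (g ⁻¹' (Icc a b) ∩ Icc c d) ∩ (g₀ ⁻¹' (Icc a b) ∩ Icc c d),
      g x = g₀ x)
    (hopen : ∃ p q : ℝ, p < q ∧
      Ioo p q ⊆ (g ⁻¹' (Icc a b) ∩ Icc c d) ∩ (g₀ ⁻¹' (Icc a b) ∩ Icc c d)) :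
    g ⁻¹' (Icc a b) ∩ Icc c d = g₀ ⁻¹' (Icc a b) ∩ Icc c d := by
  have hagree' : ∀ x ∈ (g₀ ⁻¹' (Icc a b) ∩ Icc c d) ∩ (g ⁻¹' (Icc a b) ∩ Icc c d),
      g₀ x = g x := fun x hx => (hagree x ⟨hx.2, hx.1⟩).symm
  have hopen' : ∃ p q : ℝ, p < q ∧
      Ioo p q ⊆ (g₀ ⁻¹' (Icc a b) ∩ Icc c d) ∩ (g ⁻¹' (Icc a b) ∩ Icc c d) := by
    obtain ⟨p, q, hpq, hsub⟩ := hopen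
    exact ⟨p, q, hpq, fun x hx => ⟨(hsub hx).2, (hsub hx).1⟩⟩
  exact subset_antisymm
    (effective_domains_subset a b c d g g₀ hg₀c hgm hg₀m hagree hopen)
    (effective_domains_subset a b c d g₀ g hgc hg₀m hgm hagree' hopen')
end
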